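/- Replacement for evaluation contexts: if D is a derivation of Γ₁, Γ₂ ⊢ E[M] : T, D′ is a subderivation of D concluding Γ₂ ⊢ M : U whose position in D corresponds to the hole of E, Γ₃ ⊢ N : U, and the concatenation Γ₁, Γ₃ is defined, then Γ₁, Γ₃ ⊢ E[N] : T. -/

import Mathlib

set_option autoImplicit true
set_option maxHeartbeats 1000000

/-! ## HGV types and session types -/

mutual
inductive STy : Type
  | send : Ty → STy → STy      -- !T.S
  | recv : Ty → STy → STy      -- ?T.S
  | ends : STy                 -- end!
  | endr : STy                 -- end?
inductive Ty : Type
  | unit : Ty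
  | void : Ty
  | fn   : Ty → Ty → Ty        -- T ⊸ U
  | prod : Ty → Ty → Ty
  | sum  : Ty → Ty → Ty
  | sess : STy → Ty
end

/-- Session type duality. -/
def STy.dual : STy → STy
  | .send T S => .recv T S.dual
  | .recv T S => .send T S.dual
  | .ends => .endr
  | .endr => .ends

/-! ## HGV terms -/

inductive Term : Type
  | var : String → Term
  | unit : Term
  | lam : String → Term → Term
  | app : Term → Term → Term
  | letu : Term → Term → Term                    -- let () = M in N
  | pair : Term → Term → Term
  | letp : String → String → Term → Term → Term  -- let (x,y) = M in N
  | inl : Term → Term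
  | inr : Term → Term
  | case : Term → String → Term → String → Term → Term
  | absurd : Term → Term
  | fork : Term
  | send : Term
  | recv : Term
  | wait : Term
  | link : Term

inductive IsValue : Term → Prop
  | var : IsValue (.var x)
  | unit : IsValue .unit
  | lam : IsValue (.lam x M)
  | pair : IsValue V → IsValue W → IsValue (.pair V W)
  | inl : IsValue V → IsValue (.inl V)
  | inr : IsValue V → IsValue (.inr V)
  | fork : IsValue .fork
  | send : IsValue .send
  | recv : IsValue .recv
  | wait : IsValue .wait
  | link : IsValue .link

/-- Free variables of a term. -/
def Term.fv : Term → List String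
  | .var x => [x]
  | .unit => []
  | .lam x M => M.fv.filter (fun y => y != x)
  | .app M N => M.fv ++ N.fv
  | .letu M N => M.fv ++ N.fv
  | .pair M N => M.fv ++ N.fv
  | .letp x y M N => M.fv ++ N.fv.filter (fun z => z != x && z != y)
  | .inl M => M.fv
  | .inr M => M.fv
  | .case L x M y N => L.fv ++ M.fv.filter (fun z => z != x) ++ N.fv.filter (fun z => z != y)
  | .absurd M => M.fv
  | .fork => []
  | .send => []
  | .recv => []
  | .wait => []
  | .link => []

/-- Substitution of `N` for the variable `x` (capture is avoided by not
descending under binders that shadow `x`). -/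
def Term.subst (N : Term) (x : String) : Term → Term
  | .var y => if y = x then N else .var y
  | .unit => .unit
  | .lam y M => .lam y (if y = x then M else Term.subst N x M)
  | .app M₁ M₂ => .app (Term.subst N x M₁) (Term.subst N x M₂)
  | .letu M₁ M₂ => .letu (Term.subst N x M₁) (Term.subst N x M₂)
  | .pair M₁ M₂ => .pair (Term.subst N x M₁) (Term.subst N x M₂)
  | .letp y z M₁ M₂ => .letp y z (Term.subst N x M₁) (if y = x ∨ z = x then M₂ else Term.subst N x M₂)
  | .inl M => .inl (Term.subst N x M)
  | .inr M => .inr (Term.subst N x M)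
  | .case L y M₁ z M₂ =>
      .case (Term.subst N x L) y (if y = x then M₁ else Term.subst N x M₁)
        z (if z = x then M₂ else Term.subst N x M₂)
  | .absurd M => .absurd (Term.subst N x M)
  | .fork => .fork
  | .send => .send
  | .recv => .recv
  | .wait => .wait
  | .link => .link

/-! ## Linear type environments -/

abbrev Env := List (String × Ty)

/-- `Γ, Δ` is defined only when the domains are disjoint. -/
def Env.disj (Γ Δ : Env) : Prop := ∀ x T U, (x, T) ∈ Γ → (x, U) ∈ Δ → False

def Env.dom (Γ : Env) : List String := Γ.map Prod.fst

/-! ## Term typing -/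

inductive HasType : Env → Term → Ty → Prop
  | var : HasType [(x, T)] (.var x) T
  | unit : HasType [] .unit .unit
  | lam : HasType ((x, T) :: Γ) M U → HasType Γ (.lam x M) (.fn T U)
  | app : Env.disj Γ Δ → HasType Γ M (.fn T U) → HasType Δ N T →
      HasType (Γ ++ Δ) (.app M N) U
  | letu : Env.disj Γ Δ → HasType Γ M .unit → HasType Δ N T →
      HasType (Γ ++ Δ) (.letu M N) T
  | pair : Env.disj Γ Δ → HasType Γ M T → HasType Δ N U →
      HasType (Γ ++ Δ) (.pair M N) (.prod T U)
  | letp : Env.disj Γ Δ → HasType Γ M (.prod T T') →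
      HasType ((x, T) :: (y, T') :: Δ) N U →
      HasType (Γ ++ Δ) (.letp x y M N) U
  | inl : HasType Γ M T → HasType Γ (.inl M) (.sum T U)
  | inr : HasType Γ M U → HasType Γ (.inr M) (.sum T U)
  | case : Env.disj Γ Δ → HasType Γ L (.sum T T') →
      HasType ((x, T) :: Δ) M U → HasType ((y, T') :: Δ) N U →
      HasType (Γ ++ Δ) (.case L x M y N) U
  | absurd : Env.disj Γ Δ → HasType Γ M .void → HasType (Γ ++ Δ) (.absurd M) T
  | fork : HasType [] .fork (.fn (.fn (.sess S) (.sess .ends)) (.sess S.dual))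
  | send : HasType [] .send (.fn (.prod T (.sess (.send T S))) (.sess S))
  | recv : HasType [] .recv (.fn (.sess (.recv T S)) (.prod T (.sess S)))
  | wait : HasType [] .wait (.fn (.sess .endr) .unit)
  | link : HasType [] .link (.fn (.prod (.sess S) (.sess S.dual)) (.sess .ends))
  | perm : List.Perm Γ Δ → HasType Γ M T → HasType Δ M T

/-! ## Evaluation contexts -/

inductive ECtx : Type
  | hole : ECtx
  | appL : ECtx → Term → ECtx
  | appR : (V : Term) → IsValue V → ECtx → ECtx
  | letu : ECtx → Term → ECtx
  | pairL : ECtx → Term → ECtx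
  | pairR : (V : Term) → IsValue V → ECtx → ECtx
  | letp : String → String → ECtx → Term → ECtx
  | inl : ECtx → ECtx
  | inr : ECtx → ECtx
  | case : ECtx → String → Term → String → Term → ECtx
  | absurd : ECtx → ECtx

def ECtx.plug : ECtx → Term → Term
  | .hole, M => M
  | .appL E N, M => .app (E.plug M) N
  | .appR V _ E, M => .app V (E.plug M)
  | .letu E N, M => .letu (E.plug M) N
  | .pairL E N, M => .pair (E.plug M) N
  | .pairR V _ E, M => .pair V (E.plug M)
  | .letp x y E N, M => .letp x y (E.plug M) N
  | .inl E, M => .inl (E.plug M)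
  | .inr E, M => .inr (E.plug M)
  | .case E x N₁ y N₂, M => .case (E.plug M) x N₁ y N₂
  | .absurd E, M => .absurd (E.plug M)

/-! ## Term reduction M ⟶_M N -/

inductive TRed : Term → Term → Prop
  | beta : IsValue V → TRed (.app (.lam x M) V) (Term.subst V x M)
  | letu : TRed (.letu .unit M) M
  | letp : IsValue V → IsValue W →
      TRed (.letp x y (.pair V W) M) (Term.subst W y (Term.subst V x M))
  | caseL : IsValue V → TRed (.case (.inl V) x M y N) (Term.subst V x M)
  | caseR : IsValue V → TRed (.case (.inr V) x M y N) (Term.subst V y N)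
  | lift : TRed M N → TRed (ECtx.plug E M) (ECtx.plug E N)
/-! ## Typed evaluation contexts: `CtxTyping Δ U E Γ T` means that a typing
derivation of `Γ ⊢ E[M] : T` decomposes around a subderivation `Δ ⊢ M : U`
sitting exactly at the position of the hole of `E`. -/

inductive CtxTyping (Δ : Env) (U : Ty) : ECtx → Env → Ty → Prop
  | hole : CtxTyping Δ U .hole Δ U
  | appL : CtxTyping Δ U E Γ (.fn T T') → Env.disj Γ Γ' → HasType Γ' N T →
      CtxTyping Δ U (.appL E N) (Γ ++ Γ') T'
  | appR : (h : IsValue V) → HasType Γ' V (.fn T T') → Env.disj Γ' Γ →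
      CtxTyping Δ U E Γ T → CtxTyping Δ U (.appR V h E) (Γ' ++ Γ) T'
  | letu : CtxTyping Δ U E Γ .unit → Env.disj Γ Γ' → HasType Γ' N T →
      CtxTyping Δ U (.letu E N) (Γ ++ Γ') T
  | pairL : CtxTyping Δ U E Γ T → Env.disj Γ Γ' → HasType Γ' N T' →
      CtxTyping Δ U (.pairL E N) (Γ ++ Γ') (.prod T T')
  | pairR : (h : IsValue V) → HasType Γ' V T → Env.disj Γ' Γ →
      CtxTyping Δ U E Γ T' → CtxTyping Δ U (.pairR V h E) (Γ' ++ Γ) (.prod T T')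
  | letp : CtxTyping Δ U E Γ (.prod T T') → Env.disj Γ Γ' →
      HasType ((x, T) :: (y, T') :: Γ') N T'' →
      CtxTyping Δ U (.letp x y E N) (Γ ++ Γ') T''
  | inl : CtxTyping Δ U E Γ T → CtxTyping Δ U (.inl E) Γ (.sum T T')
  | inr : CtxTyping Δ U E Γ T' → CtxTyping Δ U (.inr E) Γ (.sum T T')
  | case : CtxTyping Δ U E Γ (.sum T T') → Env.disj Γ Γ' →
      HasType ((x, T) :: Γ') M T'' → HasType ((y, T') :: Γ') N T'' →
      CtxTyping Δ U (.case E x M y N) (Γ ++ Γ') T''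
  | absurd : CtxTyping Δ U E Γ .void → Env.disj Γ Γ' →
      CtxTyping Δ U (.absurd E) (Γ ++ Γ') T
  | perm : List.Perm Γ Γ' → CtxTyping Δ U E Γ T → CtxTyping Δ U E Γ' T

/-! Each frame of a typed evaluation context splits off its own environment, so the
environment of the context is, up to permutation, a frame `Γ₀` followed by the environment
`Δ` of the hole, and `Γ₀` alone retypes `E[N]` for every `N : U` whose environment is
disjoint from it. Cancelling the hole environment `Γ₂` in `Γ₁ ++ Γ₂ ~ Γ₀ ++ Γ₂`
identifies the frame with `Γ₁` up to permutation. -/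

namespace Env

theorem disj.symm {Γ Δ : Env} (h : Env.disj Γ Δ) : Env.disj Δ Γ :=
  fun x T U hΔ hΓ => h x U T hΓ hΔ

theorem disj.mono_left {Γ Γ' Δ : Env} (hsub : Γ' ⊆ Γ) (h : Env.disj Γ Δ) :
    Env.disj Γ' Δ :=
  fun x T U hΓ' hΔ => h x T U (hsub hΓ') hΔ

theorem disj_append_left {A B C : Env} :
    Env.disj (A ++ B) C ↔ Env.disj A C ∧ Env.disj B C := by
  simp only [Env.disj, List.mem_append, or_imp, forall_and]

theorem disj_append_right {A B C : Env} :
    Env.disj A (B ++ C) ↔ Env.disj A B ∧ Env.disj A C := by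
  simp only [Env.disj, List.mem_append, or_imp, imp_and, forall_and]

end Env

def ECtx.HasFrame (E : ECtx) (Γ₀ : Env) (U T : Ty) : Prop :=
  ∀ (Δ : Env) (N : Term), HasType Δ N U → Env.disj Γ₀ Δ → HasType (Γ₀ ++ Δ) (E.plug N) T

namespace ECtx.HasFrame

variable {E E' : ECtx} {Γ Γ' Γ₀ Δ : Env} {U T T' : Ty}

theorem extend_left (C : Term → Term) (hplug : ∀ N, E'.plug N = C (E.plug N))
    (rule : ∀ Γ M, Env.disj Γ Γ' → HasType Γ M T → HasType (Γ ++ Γ') (C M) T')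
    (hperm : Γ.Perm (Γ₀ ++ Δ)) (hdisj : Env.disj Γ Γ') (hE : E.HasFrame Γ₀ U T) :
    ∃ Γ₁, (Γ ++ Γ').Perm (Γ₁ ++ Δ) ∧ E'.HasFrame Γ₁ U T' := by
  have hswap : ∀ A : Env, (Γ₀ ++ A ++ Γ').Perm (Γ₀ ++ Γ' ++ A) := fun A => by
    simpa only [List.append_assoc] using List.perm_append_comm.append_left Γ₀
  refine ⟨Γ₀ ++ Γ', (hperm.append_right Γ').trans (hswap Δ), ?_⟩
  intro Δ' N hN hd
  obtain ⟨hΓ₀Δ', hΓ'Δ'⟩ := Env.disj_append_left.mp hd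
  have hΓ₀ : Γ₀ ⊆ Γ :=
    List.Subset.trans (List.subset_append_left Γ₀ Δ) hperm.symm.subset
  have hΓ₀Γ' : Env.disj Γ₀ Γ' := hdisj.mono_left hΓ₀
  rw [hplug]
  exact HasType.perm (hswap Δ')
    (rule _ _ (Env.disj_append_left.mpr ⟨hΓ₀Γ', hΓ'Δ'.symm⟩) (hE Δ' N hN hΓ₀Δ'))

theorem extend_right (C : Term → Term) (hplug : ∀ N, E'.plug N = C (E.plug N))
    (rule : ∀ Γ M, Env.disj Γ' Γ → HasType Γ M T → HasType (Γ' ++ Γ) (C M) T')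
    (hperm : Γ.Perm (Γ₀ ++ Δ)) (hdisj : Env.disj Γ' Γ) (hE : E.HasFrame Γ₀ U T) :
    ∃ Γ₁, (Γ' ++ Γ).Perm (Γ₁ ++ Δ) ∧ E'.HasFrame Γ₁ U T' := by
  refine ⟨Γ' ++ Γ₀, by simpa only [List.append_assoc] using hperm.append_left Γ', ?_⟩
  intro Δ' N hN hd
  obtain ⟨hΓ'Δ', hΓ₀Δ'⟩ := Env.disj_append_left.mp hd
  have hΓ₀ : Γ₀ ⊆ Γ :=
    List.Subset.trans (List.subset_append_left Γ₀ Δ) hperm.symm.subset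
  have hΓ'Γ₀ : Env.disj Γ' Γ₀ := (hdisj.symm.mono_left hΓ₀).symm
  rw [hplug, List.append_assoc]
  exact rule _ _ (Env.disj_append_right.mpr ⟨hΓ'Γ₀, hΓ'Δ'⟩) (hE Δ' N hN hΓ₀Δ')

end ECtx.HasFrame

theorem CtxTyping.exists_frame {Δ Γ : Env} {U T : Ty} {E : ECtx}
    (h : CtxTyping Δ U E Γ T) : ∃ Γ₀, Γ.Perm (Γ₀ ++ Δ) ∧ E.HasFrame Γ₀ U T := by
  induction h with
  | hole => exact ⟨[], .refl _, fun _ _ hN _ => hN⟩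
  | appL _ hdisj hN ih =>
    obtain ⟨Γ₀, hperm, hE⟩ := ih
    exact hE.extend_left _ (fun _ => rfl) (fun _ _ hd hM => .app hd hM hN) hperm hdisj
  | appR _ hV hdisj _ ih =>
    obtain ⟨Γ₀, hperm, hE⟩ := ih
    exact hE.extend_right _ (fun _ => rfl) (fun _ _ hd hM => .app hd hV hM) hperm hdisj
  | letu _ hdisj hN ih =>
    obtain ⟨Γ₀, hperm, hE⟩ := ih
    exact hE.extend_left _ (fun _ => rfl) (fun _ _ hd hM => .letu hd hM hN) hperm hdisj
  | pairL _ hdisj hN ih =>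
    obtain ⟨Γ₀, hperm, hE⟩ := ih
    exact hE.extend_left _ (fun _ => rfl) (fun _ _ hd hM => .pair hd hM hN) hperm hdisj
  | pairR _ hV hdisj _ ih =>
    obtain ⟨Γ₀, hperm, hE⟩ := ih
    exact hE.extend_right _ (fun _ => rfl) (fun _ _ hd hM => .pair hd hV hM) hperm hdisj
  | letp _ hdisj hN ih =>
    obtain ⟨Γ₀, hperm, hE⟩ := ih
    exact hE.extend_left _ (fun _ => rfl) (fun _ _ hd hM => .letp hd hM hN) hperm hdisj
  | inl _ ih =>
    obtain ⟨Γ₀, hperm, hE⟩ := ih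
    exact ⟨Γ₀, hperm, fun Δ' N hN hd => .inl (hE Δ' N hN hd)⟩
  | inr _ ih =>
    obtain ⟨Γ₀, hperm, hE⟩ := ih
    exact ⟨Γ₀, hperm, fun Δ' N hN hd => .inr (hE Δ' N hN hd)⟩
  | case _ hdisj hM hN ih =>
    obtain ⟨Γ₀, hperm, hE⟩ := ih
    exact hE.extend_left _ (fun _ => rfl) (fun _ _ hd hL => .case hd hL hM hN) hperm hdisj
  | absurd _ hdisj ih =>
    obtain ⟨Γ₀, hperm, hE⟩ := ih
    exact hE.extend_left _ (fun _ => rfl) (fun _ _ hd hM => .absurd hd hM) hperm hdisj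
  | perm hp _ ih =>
    obtain ⟨Γ₀, hperm, hE⟩ := ih
    exact ⟨Γ₀, hp.symm.trans hperm, hE⟩

/-- **Replacement (evaluation contexts).** If a derivation of
`Γ₁, Γ₂ ⊢ E[M] : T` has a subderivation concluding `Γ₂ ⊢ M : U` whose position
corresponds to the hole of `E` (witnessed by `CtxTyping Γ₂ U E (Γ₁ ++ Γ₂) T`),
`Γ₃ ⊢ N : U`, and `Γ₁, Γ₃` is defined, then `Γ₁, Γ₃ ⊢ E[N] : T`. -/
theorem replacement (Γ₁ Γ₂ Γ₃ : Env) (E : ECtx) (M N : Term) (T U : Ty)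
    (hD : HasType (Γ₁ ++ Γ₂) (ECtx.plug E M) T)
    (hsub : HasType Γ₂ M U)
    (hpos : CtxTyping Γ₂ U E (Γ₁ ++ Γ₂) T)
    (hN : HasType Γ₃ N U)
    (hdef : Env.disj Γ₁ Γ₃) :
    HasType (Γ₁ ++ Γ₃) (ECtx.plug E N) T := by
  obtain ⟨Γ₀, hperm, hE⟩ := hpos.exists_frame
  have hΓ₁ : Γ₁.Perm Γ₀ := List.perm_append_right_iff Γ₂ |>.mp hperm
  exact HasType.perm (hΓ₁.symm.append_right Γ₃)
    (hE Γ₃ N hN (hdef.mono_left hΓ₁.symm.subset))
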